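/- arXiv:0903.0917 — 2 statements merged into one kernel-verified Lean document; each statement's English description precedes it below -/
import Mathlib

section
/- Let F be a field, v, s_1, s_2, s_3 ∈ F with s_1 ≠ s_2, s_2 ≠ v^2 s_1, s_1 ≠ v^2 s_2, and let a, b ∈ ℤ (assume s_1, s_2 nonzero if a or b is negative). Define F(x, y) := x^a y^b · [v^2 (y − s_3)(x − s_3) − (1 + v^2)(y − v^2 s_3)(x − s_3) + (y − v^2 s_3)(x − v^2 s_3)] / ((x − y)(y − v^2 x)). Then F(s_1, s_2) + F(s_2, s_1) = (1 − v^2) s_3 (s_1^a s_2^b − s_1^b s_2^a)/(s_1 − s_2); in particular this sum is antisymmetric under exchanging a and b. -/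
/-- The rational identity verifying the q-Serre relation on matrix coefficients
in the torus fixed-point basis; the sum is antisymmetric under `a ↔ b`. -/
theorem serre_rational_identity
    {K : Type*} [Field K] (v s₁ s₂ s₃ : K) (a b : ℤ)
    (h12 : s₁ ≠ s₂) (h21 : s₂ ≠ v ^ 2 * s₁) (h12' : s₁ ≠ v ^ 2 * s₂)
    (hneg : a < 0 ∨ b < 0 → s₁ ≠ 0 ∧ s₂ ≠ 0) :
    (fun x y : K => x ^ a * y ^ b *
        (v ^ 2 * (y - s₃) * (x - s₃)
          - (1 + v ^ 2) * (y - v ^ 2 * s₃) * (x - s₃)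
          + (y - v ^ 2 * s₃) * (x - v ^ 2 * s₃)) /
        ((x - y) * (y - v ^ 2 * x))) s₁ s₂ +
    (fun x y : K => x ^ a * y ^ b *
        (v ^ 2 * (y - s₃) * (x - s₃)
          - (1 + v ^ 2) * (y - v ^ 2 * s₃) * (x - s₃)
          + (y - v ^ 2 * s₃) * (x - v ^ 2 * s₃)) /
        ((x - y) * (y - v ^ 2 * x))) s₂ s₁ =
    (1 - v ^ 2) * s₃ * (s₁ ^ a * s₂ ^ b - s₁ ^ b * s₂ ^ a) / (s₁ - s₂) := by
  have h1 : s₂ - v ^ 2 * s₁ ≠ 0 := sub_ne_zero.mpr h21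
  have h2 : s₁ - v ^ 2 * s₂ ≠ 0 := sub_ne_zero.mpr h12'
  have hd : s₁ - s₂ ≠ 0 := sub_ne_zero.mpr h12
  have hd' : s₂ - s₁ ≠ 0 := sub_ne_zero.mpr (Ne.symm h12)
  simp only []
  rw [div_add_div _ _ (mul_ne_zero hd h1) (mul_ne_zero hd' h2), div_eq_div_iff
    (mul_ne_zero (mul_ne_zero hd h1) (mul_ne_zero hd' h2)) hd]
  ring
end

section
/- Fix i ≥ 1 and a collection of nonnegative integers (d_{j,p})_{p ≤ j ≤ i+1}. In the field C(t_1,…,t_n, v, z), define a_j(z) := Π_{p ≤ j} (1 − z^{−1} t_p^2 v^{−2 d_{j,p}}) and φ_i(z) := t_{i+1}^{−1} t_i v^{d_{i+1} − 2 d_i + d_{i−1} − 1} · a_{i+1}(z v^{−i−2}) a_{i−1}(z v^{−i}) / (a_i(z v^{−i−2}) a_i(z v^{−i})), where d_j := Σ_{p ≤ j} d_{j,p}. Let (d'_{j,p}) be obtained from (d_{j,p}) by replacing d_{i,p_0} by d_{i,p_0} + 1 for a single index p_0 ≤ i, and let φ'_i(z) be defined by the same formula from (d'_{j,p}). Then φ'_i(z)/φ_i(z)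 = v^{−2} · (1 − z^{−1} v^{i+2} t_{p_0}^2 v^{−2 d_{i,p_0}}) / (1 − z^{−1} v^{i−2} t_{p_0}^2 v^{−2 d_{i,p_0}}). -/
variable {F : Type*} [Field F]

/-- `a_j(w) = Π_{p ≤ j} (1 − w⁻¹ t_p² v^{−2 d_{j,p}})`. -/
noncomputable def aSer (t : ℕ → F) (v : F) (d : ℕ → ℕ → ℕ) (j : ℕ) (w : F) : F :=
  ∏ p ∈ Finset.Icc 1 j, (1 - w⁻¹ * t p ^ 2 * v ^ (-2 * (d j p : ℤ)))

/-- `d_j = Σ_{p ≤ j} d_{j,p}`. -/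
def dSum (d : ℕ → ℕ → ℕ) (j : ℕ) : ℕ := ∑ p ∈ Finset.Icc 1 j, d j p

/-- `φ_i(z) = t_{i+1}⁻¹ t_i v^{d_{i+1} − 2d_i + d_{i−1} − 1}
  a_{i+1}(z v^{−i−2}) a_{i−1}(z v^{−i}) / (a_i(z v^{−i−2}) a_i(z v^{−i}))`. -/
noncomputable def phiSer (t : ℕ → F) (v z : F) (d : ℕ → ℕ → ℕ) (i : ℕ) : F :=
  (t (i + 1))⁻¹ * t i *
    v ^ ((dSum d (i + 1) : ℤ) - 2 * (dSum d i : ℤ) + (dSum d (i - 1) : ℤ) - 1) *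
    aSer t v d (i + 1) (z * v ^ (-(i : ℤ) - 2)) * aSer t v d (i - 1) (z * v ^ (-(i : ℤ))) /
    (aSer t v d i (z * v ^ (-(i : ℤ) - 2)) * aSer t v d i (z * v ^ (-(i : ℤ)))) 


/-! Raising `d_{i,p₀}` changes only the `p₀`-th factor of `a_i`, and it shifts that factor's
exponent by exactly the distance `v^{-2}` between the two evaluation points `z v^{-i-2}` and
`z v^{-i}`. So in `φ'_i / φ_i` the two ratios of `a_i` factors telescope to a single quotient,
while the change of `d_i` by one contributes `v^{-2}`. -/

open Finset

section Rows

variable {t : ℕ → F} {v : F} {d d' : ℕ → ℕ → ℕ}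

theorem aSer_congr_row {j : ℕ} (h : d' j = d j) (w : F) :
    aSer t v d' j w = aSer t v d j w := by
  simp only [aSer, h]

theorem dSum_congr_row {j : ℕ} (h : d' j = d j) : dSum d' j = dSum d j := by
  simp only [dSum, h]

theorem aSer_ne_zero {j : ℕ} {w : F} (hw : ∀ p (e : ℤ), 1 - w⁻¹ * t p ^ 2 * v ^ e ≠ 0) :
    aSer t v d j w ≠ 0 :=
  prod_ne_zero_iff.mpr fun p _ => hw p _

variable {j p₀ : ℕ} (hp₀ : p₀ ∈ Icc 1 j) (hne : ∀ p ≠ p₀, d' j p = d j p)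
  (hinc : d' j p₀ = d j p₀ + 1)
include hp₀ hne hinc

theorem dSum_of_increment : dSum d' j = dSum d j + 1 := by
  unfold dSum
  rw [← add_sum_erase _ _ hp₀, ← add_sum_erase _ _ hp₀, hinc,
    sum_congr rfl fun p hp => hne p (ne_of_mem_erase hp)]
  ring

theorem aSer_div_of_increment {w : F} (hw : ∀ p (e : ℤ), 1 - w⁻¹ * t p ^ 2 * v ^ e ≠ 0) :
    aSer t v d j w / aSer t v d' j w =
      (1 - w⁻¹ * t p₀ ^ 2 * v ^ (-2 * (d j p₀ : ℤ))) /
        (1 - w⁻¹ * t p₀ ^ 2 * v ^ (-2 * (d j p₀ : ℤ) - 2)) := by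
  rw [div_eq_div_iff (aSer_ne_zero hw) (hw _ _)]
  unfold aSer
  have hrest : ∏ p ∈ (Icc 1 j).erase p₀, (1 - w⁻¹ * t p ^ 2 * v ^ (-2 * (d' j p : ℤ))) =
      ∏ p ∈ (Icc 1 j).erase p₀, (1 - w⁻¹ * t p ^ 2 * v ^ (-2 * (d j p : ℤ))) :=
    prod_congr rfl fun p hp => by rw [hne p (ne_of_mem_erase hp)]
  rw [← mul_prod_erase _ _ hp₀, ← mul_prod_erase _ _ hp₀, hrest, hinc, Nat.cast_succ,
    mul_add_one, ← sub_eq_add_neg]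
  ring

end Rows

theorem inv_mul_zpow_shift {v : F} (hv : v ≠ 0) (z c : F) (k e : ℤ) :
    (z * v ^ k)⁻¹ * c * v ^ e = z⁻¹ * c * v ^ (e - k) := by
  rw [mul_inv, ← zpow_neg, zpow_sub₀ hv, div_eq_mul_inv, ← zpow_neg]
  ring

theorem phiSer_of_row_increment {t : ℕ → F} {v z : F} {d d' : ℕ → ℕ → ℕ} {i : ℕ} (hv : v ≠ 0)
    (hsucc : d' (i + 1) = d (i + 1)) (hpred : d' (i - 1) = d (i - 1))
    (hsum : dSum d' i = dSum d i + 1)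
    (h₁ : aSer t v d i (z * v ^ (-(i : ℤ) - 2)) ≠ 0) (h₂ : aSer t v d i (z * v ^ (-(i : ℤ))) ≠ 0) :
    phiSer t v z d' i = v ^ (-2 : ℤ) *
      (aSer t v d i (z * v ^ (-(i : ℤ) - 2)) / aSer t v d' i (z * v ^ (-(i : ℤ) - 2))) *
      (aSer t v d i (z * v ^ (-(i : ℤ))) / aSer t v d' i (z * v ^ (-(i : ℤ)))) *
      phiSer t v z d i := by
  unfold phiSer
  rw [aSer_congr_row hsucc, aSer_congr_row hpred, dSum_congr_row hsucc, dSum_congr_row hpred,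
    hsum, show ∀ (a c : ℤ) (b : ℕ), a - 2 * ((b + 1 : ℕ) : ℤ) + c - 1 = a - 2 * b + c - 1 + -2 by
      intros; push_cast; ring, zpow_add₀ hv]
  field_simp

theorem phi_recursion_same_row_general
    (t : ℕ → F) (v z : F) (d : ℕ → ℕ → ℕ) (i p₀ : ℕ)
    (hi : 1 ≤ i) (hp₀ : 1 ≤ p₀) (hp₀i : p₀ ≤ i)
    (hv : v ≠ 0)
    (hfac : ∀ (p : ℕ) (e : ℤ), (1 : F) - z⁻¹ * t p ^ 2 * v ^ e ≠ 0)
    (d' : ℕ → ℕ → ℕ)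
    (hd' : ∀ j p, d' j p = if j = i ∧ p = p₀ then d j p + 1 else d j p) :
    phiSer t v z d' i =
      v ^ (-2 : ℤ) *
        (1 - z⁻¹ * v ^ ((i : ℤ) + 2) * t p₀ ^ 2 * v ^ (-2 * (d i p₀ : ℤ))) /
        (1 - z⁻¹ * v ^ ((i : ℤ) - 2) * t p₀ ^ 2 * v ^ (-2 * (d i p₀ : ℤ))) *
        phiSer t v z d i := by
  have hmem : p₀ ∈ Icc 1 i := mem_Icc.mpr ⟨hp₀, hp₀i⟩
  have hrow : ∀ j ≠ i, d' j = d j := fun j hj => funext fun p => by simp [hd', hj]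
  have hne : ∀ p ≠ p₀, d' i p = d i p := fun p hp => by simp [hd', hp]
  have hinc : d' i p₀ = d i p₀ + 1 := by simp [hd']
  have hw : ∀ (k : ℤ) p (e : ℤ), 1 - (z * v ^ k)⁻¹ * t p ^ 2 * v ^ e ≠ 0 := fun k p e => by
    rw [inv_mul_zpow_shift hv]; exact hfac p _
  rw [phiSer_of_row_increment hv (hrow _ (by omega)) (hrow _ (by omega))
      (dSum_of_increment hmem hne hinc) (aSer_ne_zero (hw _)) (aSer_ne_zero (hw _)),
    aSer_div_of_increment hmem hne hinc (hw _), aSer_div_of_increment hmem hne hinc (hw _)]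
  have hshift : ∀ a b : ℤ, 1 - z⁻¹ * v ^ a * t p₀ ^ 2 * v ^ b = 1 - z⁻¹ * t p₀ ^ 2 * v ^ (b + a) :=
    fun a b => by rw [zpow_add₀ hv]; ring
  simp only [inv_mul_zpow_shift hv, hshift]
  -- the new factor at `z v^{-i-2}` is the old one at `z v^{-i}`
  rw [show -2 * (d i p₀ : ℤ) - 2 - (-(i : ℤ) - 2) = -2 * (d i p₀ : ℤ) - -(i : ℤ) by ring,
    mul_assoc (v ^ (-2 : ℤ)), div_mul_div_cancel₀ (hfac _ _), ← mul_div_assoc]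
  ring_nf

/-- Recursion (2.3): incrementing `d_{i,p₀}` multiplies the Cartan eigenvalue
`φ_i(z)` by `v^{−2}(1 − z⁻¹v^{i+2}t_{p₀}²v^{−2d_{i,p₀}})/(1 − z⁻¹v^{i−2}t_{p₀}²v^{−2d_{i,p₀}})`. -/
theorem phi_recursion_same_row
    (t : ℕ → F) (v z : F) (d : ℕ → ℕ → ℕ) (i p₀ : ℕ)
    (hi : 1 ≤ i) (hp₀ : 1 ≤ p₀) (hp₀i : p₀ ≤ i)
    (hv : v ≠ 0) (hz : z ≠ 0) (ht : ∀ p, t p ≠ 0)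
    (hfac : ∀ (p : ℕ) (e : ℤ), (1 : F) - z⁻¹ * t p ^ 2 * v ^ e ≠ 0)
    (d' : ℕ → ℕ → ℕ)
    (hd' : ∀ j p, d' j p = if j = i ∧ p = p₀ then d j p + 1 else d j p) :
    phiSer t v z d' i =
      v ^ (-2 : ℤ) *
        (1 - z⁻¹ * v ^ ((i : ℤ) + 2) * t p₀ ^ 2 * v ^ (-2 * (d i p₀ : ℤ))) /
        (1 - z⁻¹ * v ^ ((i : ℤ) - 2) * t p₀ ^ 2 * v ^ (-2 * (d i p₀ : ℤ))) *
        phiSer t v z d i :=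
  phi_recursion_same_row_general t v z d i p₀ hi hp₀ hp₀i hv hfac d' hd'
end
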